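/- Let A, B, C be pairwise disjoint nonempty sets of sizes a, b, c and let p_{AB} be as in the equidistant case. Then the vector −p_{AB} satisfies the UPGMA tie-and-minimality conditions: (1/(ac))·Σ_{i∈A,j∈C}(−p_{AB})_{ij} = (1/(bc))·Σ_{k∈B,ℓ∈C}(−p_{AB})_{kℓ} = −ab/(ab+ac+bc), and (1/(ab))·Σ_{m∈A,n∈B}(−p_{AB})_{mn} = (ac+bc)/(ab+ac+bc), so in particular the common AC/BC average is strictly less than the AB average. -/

import Mathlib

/-! On each of the blocks A × C, B × C and A × B exactly one of the three splits in p_{AB}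
separates a pair drawn from that block, so −p_{AB} is constant on the block and its average
there is that constant. -/

open Finset
open scoped Classical

variable {X : Type*} [Fintype X] [DecidableEq X]

/-- Split pseudometric: coordinate at pair s is 1 if s meets both U and V, else 0. -/
noncomputable def splitDelta (U V : Finset X) : EuclideanSpace ℝ (Sym2 X) :=
  WithLp.toLp 2 fun s => if (∃ i ∈ s, i ∈ U) ∧ (∃ j ∈ s, j ∈ V) then 1 else 0

lemma splitDelta_apply_mk (U V : Finset X) (i j : X) :
    splitDelta U V s(i, j) = if (i ∈ U ∨ j ∈ U) ∧ (i ∈ V ∨ j ∈ V) then 1 else 0 := by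
  simp [splitDelta]

lemma splitDelta_apply_mk_of_mem {U V : Finset X} {i j : X} (hi : i ∈ U) (hj : j ∈ V) :
    splitDelta U V s(i, j) = 1 := by
  simp [splitDelta_apply_mk, hi, hj]

lemma splitDelta_apply_mk_of_notMem_left {U V : Finset X} {i j : X} (hi : i ∉ U) (hj : j ∉ U) :
    splitDelta U V s(i, j) = 0 := by
  simp [splitDelta_apply_mk, hi, hj]

lemma splitDelta_apply_mk_of_notMem_right {U V : Finset X} {i j : X} (hi : i ∉ V) (hj : j ∉ V) :
    splitDelta U V s(i, j) = 0 := by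
  simp [splitDelta_apply_mk, hi, hj]

lemma one_div_card_mul_sum_sum_eq_of_forall_eq {α β : Type*} {U : Finset α} {V : Finset β}
    {f : α → β → ℝ} {x : ℝ} (hU : U.Nonempty) (hV : V.Nonempty)
    (hf : ∀ i ∈ U, ∀ j ∈ V, f i j = x) :
    1 / ((#U : ℝ) * #V) * ∑ i ∈ U, ∑ j ∈ V, f i j = x := by
  have hU' : (#U : ℝ) ≠ 0 := by exact_mod_cast hU.card_pos.ne'
  have hV' : (#V : ℝ) ≠ 0 := by exact_mod_cast hV.card_pos.ne'
  rw [sum_congr rfl fun i hi => sum_congr rfl (hf i hi)]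
  simp only [sum_const, nsmul_eq_mul]
  field_simp

section ThreeBlocks

variable {A B C : Finset X} (α β : ℝ) {i j : X}

lemma splitDelta_combination_apply_of_mem_left_right (hAB : Disjoint A B) (hBC : Disjoint B C)
    (hi : i ∈ A) (hj : j ∈ C) :
    (α • splitDelta A B + β • (splitDelta A C + splitDelta B C)) s(i, j) = β := by
  have hiB : i ∉ B := disjoint_left.mp hAB hi
  have hjB : j ∉ B := disjoint_right.mp hBC hj
  simp [splitDelta_apply_mk_of_notMem_right hiB hjB, splitDelta_apply_mk_of_mem hi hj,
    splitDelta_apply_mk_of_notMem_left hiB hjB]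

lemma splitDelta_combination_apply_of_mem_mid_right (hAB : Disjoint A B) (hAC : Disjoint A C)
    (hi : i ∈ B) (hj : j ∈ C) :
    (α • splitDelta A B + β • (splitDelta A C + splitDelta B C)) s(i, j) = β := by
  have hiA : i ∉ A := disjoint_right.mp hAB hi
  have hjA : j ∉ A := disjoint_right.mp hAC hj
  simp [splitDelta_apply_mk_of_notMem_left hiA hjA, splitDelta_apply_mk_of_mem hi hj]

lemma splitDelta_combination_apply_of_mem_left_mid (hAC : Disjoint A C) (hBC : Disjoint B C)
    (hi : i ∈ A) (hj : j ∈ B) :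
    (α • splitDelta A B + β • (splitDelta A C + splitDelta B C)) s(i, j) = α := by
  have hiC : i ∉ C := disjoint_left.mp hAC hi
  have hjC : j ∉ C := disjoint_left.mp hBC hj
  simp [splitDelta_apply_mk_of_mem hi hj, splitDelta_apply_mk_of_notMem_right hiC hjC]

end ThreeBlocks

/-- −p_{AB} satisfies the UPGMA tie-and-minimality conditions: the averages of its
coordinates over A×C and over B×C both equal −ab/(ab+ac+bc), the average over A×B equals
(ac+bc)/(ab+ac+bc), and the former is strictly less than the latter. -/
theorem neg_pAB_upgma_conditions (A B C : Finset X)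
    (hA : A.Nonempty) (hB : B.Nonempty) (hC : C.Nonempty)
    (hAB : Disjoint A B) (hAC : Disjoint A C) (hBC : Disjoint B C) :
    let a : ℝ := A.card; let b : ℝ := B.card; let c : ℝ := C.card
    let pAB := ((-(a * c + b * c) / (a * b + a * c + b * c)) • splitDelta A B +
        (a * b / (a * b + a * c + b * c)) • (splitDelta A C + splitDelta B C) :
        EuclideanSpace ℝ (Sym2 X))
    (1 / (a * c)) * (∑ i ∈ A, ∑ j ∈ C, (-pAB) s(i, j)) =
        -(a * b) / (a * b + a * c + b * c) ∧
    (1 / (b * c)) * (∑ k ∈ B, ∑ l ∈ C, (-pAB) s(k, l)) =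
        -(a * b) / (a * b + a * c + b * c) ∧
    (1 / (a * b)) * (∑ m ∈ A, ∑ n ∈ B, (-pAB) s(m, n)) =
        (a * c + b * c) / (a * b + a * c + b * c) ∧
    -(a * b) / (a * b + a * c + b * c) <
        (a * c + b * c) / (a * b + a * c + b * c) := by
  intro a b c pAB
  refine ⟨?_, ?_, ?_, ?_⟩
  · refine one_div_card_mul_sum_sum_eq_of_forall_eq hA hC fun i hi j hj => ?_
    rw [PiLp.neg_apply, splitDelta_combination_apply_of_mem_left_right _ _ hAB hBC hi hj, neg_div]
  · refine one_div_card_mul_sum_sum_eq_of_forall_eq hB hC fun i hi j hj => ?_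
    rw [PiLp.neg_apply, splitDelta_combination_apply_of_mem_mid_right _ _ hAB hAC hi hj, neg_div]
  · refine one_div_card_mul_sum_sum_eq_of_forall_eq hA hB fun i hi j hj => ?_
    rw [PiLp.neg_apply, splitDelta_combination_apply_of_mem_left_mid _ _ hAC hBC hi hj, neg_div,
      neg_neg]
  · have ha : 0 < a := Nat.cast_pos.mpr hA.card_pos
    have hb : 0 < b := Nat.cast_pos.mpr hB.card_pos
    have hc : 0 < c := Nat.cast_pos.mpr hC.card_pos
    gcongr
    linarith [mul_pos ha hb, mul_pos ha hc, mul_pos hb hc]
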